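/- Let $\Omega$ be a commutative semigroup, $(L, [\cdot,\cdot]_{\alpha,\beta})_{\alpha,\beta\in\Omega}$ an $\Omega$-Lie algebra, and $p_\alpha, q_\alpha: L\to L$ two commuting families of $\Omega$-Lie algebra morphisms. Define $\{x,y\}_{\alpha,\beta} := [p_\alpha(x), q_\beta(y)]_{\alpha,\beta}$. Then $(L, \{\cdot,\cdot\}_{\alpha,\beta}, p_\alpha, q_\alpha)_{\alpha,\beta\in\Omega}$ is a BiHom-$\Omega$-Lie algebra. -/

import Mathlib

/-! The twisted operations are the Ω-Lie operations evaluated at twisted arguments: once `p` and `q`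
are pushed inside the bracket (they are morphisms) and sorted (they commute), BiHom-skew-symmetry
becomes skew-symmetry and the BiHom-Jacobi sum becomes the Ω-Jacobi sum at `q²p x, q²p y, q²p z`. -/

section YauTwist

variable {Ω L : Type*}

def yauTwist (br : Ω → Ω → L → L → L) (p q : Ω → L → L) (α β : Ω) (x y : L) : L :=
  br α β (p α x) (q β y)

variable {br : Ω → Ω → L → L → L} {p q : Ω → L → L}

theorem yauTwist_map [Mul Ω] {f : Ω → L → L}
    (hf : ∀ α β x y, f (α * β) (br α β x y) = br α β (f α x) (f β y))
    (hfp : ∀ α x, f α (p α x) = p α (f α x)) (hfq : ∀ α x, f α (q α x) = q α (f α x))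
    (α β : Ω) (x y : L) :
    f (α * β) (yauTwist br p q α β x y) = yauTwist br p q α β (f α x) (f β y) := by
  simp only [yauTwist, hf, hfp, hfq]

theorem yauTwist_skew [Neg L] (hskew : ∀ α β x y, br α β x y = -br β α y x)
    (hpq : ∀ α x, p α (q α x) = q α (p α x)) (α β : Ω) (x y : L) :
    yauTwist br p q α β (q α x) (p β y) = -yauTwist br p q β α (q β y) (p α x) := by
  simp only [yauTwist, hpq]
  exact hskew _ _ _ _

theorem yauTwist_jacobi [Mul Ω] [Add L] [Zero L]
    (hjac : ∀ α β γ x y z,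
      br α (β * γ) x (br β γ y z) + br β (γ * α) y (br γ α z x)
        + br γ (α * β) z (br α β x y) = 0)
    (hq : ∀ α β x y, q (α * β) (br α β x y) = br α β (q α x) (q β y))
    (hpq : ∀ α x, p α (q α x) = q α (p α x)) (α β γ : Ω) (x y z : L) :
    yauTwist br p q α (β * γ) (q α (q α x)) (yauTwist br p q β γ (q β y) (p γ z))
      + yauTwist br p q β (γ * α) (q β (q β y)) (yauTwist br p q γ α (q γ z) (p α x))
      + yauTwist br p q γ (α * β) (q γ (q γ z)) (yauTwist br p q α β (q α x) (p β y)) = 0 := by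
  simp only [yauTwist, hq, hpq]
  exact hjac _ _ _ _ _ _

end YauTwist

/-- Yau twist of an Ω-Lie algebra gives a BiHom-Ω-Lie algebra. -/
theorem stmt_10
    {K : Type*} [Field K] {Ω : Type*} [CommSemigroup Ω]
    {L : Type*} [AddCommGroup L] [Module K L]
    (br : Ω → Ω → L →ₗ[K] L →ₗ[K] L)
    (p q : Ω → L →ₗ[K] L)
    -- Ω-Lie axioms
    (hskew : ∀ (α β : Ω) (x y : L), br α β x y = - br β α y x)
    (hjac : ∀ (α β γ : Ω) (x y z : L),
      br α (β * γ) x (br β γ y z) + br β (γ * α) y (br γ α z x)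
        + br γ (α * β) z (br α β x y) = 0)
    -- p, q are Ω-Lie algebra morphisms
    (hp : ∀ (α β : Ω) (x y : L), p (α * β) (br α β x y) = br α β (p α x) (p β y))
    (hq : ∀ (α β : Ω) (x y : L), q (α * β) (br α β x y) = br α β (q α x) (q β y))
    -- the families commute
    (hpq : ∀ (α : Ω) (x : L), p α (q α x) = q α (p α x))
    -- the twisted bracket
    (cbr : Ω → Ω → L → L → L)
    (hcbr : ∀ (α β : Ω) (x y : L), cbr α β x y = br α β (p α x) (q β y)) :
    -- (L, cbr, p, q) is a BiHom-Ω-Lie algebra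
    (∀ (α β : Ω) (x y : L), p (α * β) (cbr α β x y) = cbr α β (p α x) (p β y)) ∧
    (∀ (α β : Ω) (x y : L), q (α * β) (cbr α β x y) = cbr α β (q α x) (q β y)) ∧
    (∀ (α β : Ω) (x y : L), cbr α β (q α x) (p β y) = - cbr β α (q β y) (p α x)) ∧
    (∀ (α β γ : Ω) (x y z : L),
      cbr α (β * γ) (q α (q α x)) (cbr β γ (q β y) (p γ z))
        + cbr β (γ * α) (q β (q β y)) (cbr γ α (q γ z) (p α x))
        + cbr γ (α * β) (q γ (q γ z)) (cbr α β (q α x) (p β y)) = 0) := by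
  obtain rfl : cbr = yauTwist (fun α β x y => br α β x y) (fun α => p α) (fun α => q α) := by
    funext α β x y
    exact hcbr α β x y
  exact ⟨yauTwist_map hp (fun _ _ => rfl) hpq,
    yauTwist_map hq (fun α x => (hpq α x).symm) (fun _ _ => rfl),
    yauTwist_skew hskew hpq, yauTwist_jacobi hjac hq hpq⟩
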